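/- arXiv:1208.1271 — 4 statements merged into one kernel-verified Lean document; each statement's English description precedes it below -/
import Mathlib

section
/- The generalized Eulerian polynomials satisfy the duplication identity A_n(a², b²) = ∑_{k=0}^{n} binom(n,k) (1+a)^k A_k(a,b) A_{n-k}(-a,b) (1-a)^{n-k}, arising from the factorization (1-a²)/((b²)^{t(1-a²)} - a²) = [(1-a)/(b^{t(1-a²)} - a)] · [(1+a)/(b^{t(1-a²)} + a)]. -/
/-!
With `x = t (1 - a²) log b` one has `e^{2x} - a² = (e^x - a)(e^x + a)`, so the generating function
of `A(a², b²)` is the product of those of `A(a, b)` and `A(-a, b)`, evaluated at `t (1 + a)` and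
`t (1 - a)` respectively. Multiplying exponential generating functions convolves their coefficients
binomially, and the coefficients of a power series converging near `0` are unique.
-/

open Finset Filter Topology

theorem eq_of_eventually_hasSum_pow_smul {𝕜 E : Type*} [NontriviallyNormedField 𝕜]
    [NormedAddCommGroup E] [NormedSpace 𝕜 E] {c d : ℕ → E} {f : 𝕜 → E}
    (hc : ∀ᶠ t in 𝓝 0, HasSum (fun n => t ^ n • c n) (f t))
    (hd : ∀ᶠ t in 𝓝 0, HasSum (fun n => t ^ n • d n) (f t)) : c = d := by
  let series (e : ℕ → E) : FormalMultilinearSeries 𝕜 𝕜 E :=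
    fun n => ContinuousMultilinearMap.mkPiRing 𝕜 (Fin n) (e n)
  have coeff_series (e : ℕ → E) (n : ℕ) : (series e).coeff n = e n := by
    simp [series, FormalMultilinearSeries.coeff]
  have hasFPowerSeriesAt (e : ℕ → E) (he : ∀ᶠ t in 𝓝 0, HasSum (fun n => t ^ n • e n) (f t)) :
      HasFPowerSeriesAt f (series e) 0 :=
    hasFPowerSeriesAt_iff.mpr (by simpa only [coeff_series, zero_add] using he)
  funext n
  rw [← coeff_series c, ← coeff_series d,
    (hasFPowerSeriesAt c hc).eq_formalMultilinearSeries (hasFPowerSeriesAt d hd)]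

theorem eq_of_eventually_hasSum_egf {𝕜 : Type*} [NontriviallyNormedField 𝕜] [CharZero 𝕜]
    {c d : ℕ → 𝕜} {f : 𝕜 → 𝕜}
    (hc : ∀ᶠ t in 𝓝 0, HasSum (fun n => c n * t ^ n / n.factorial) (f t))
    (hd : ∀ᶠ t in 𝓝 0, HasSum (fun n => d n * t ^ n / n.factorial) (f t)) : c = d := by
  have reorder (e : ℕ → 𝕜) (t : 𝕜) :
      (fun n => e n * t ^ n / n.factorial) = fun n => t ^ n • (e n / n.factorial) := by
    funext n
    rw [smul_eq_mul]
    ring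
  have h := eq_of_eventually_hasSum_pow_smul (c := fun n => c n / n.factorial)
    (d := fun n => d n / n.factorial) (f := f) (by simpa only [reorder] using hc)
    (by simpa only [reorder] using hd)
  funext n
  exact (div_left_inj' (Nat.cast_ne_zero.mpr n.factorial_ne_zero)).mp (congrFun h n)

theorem hasSum_egf_mul {𝕜 : Type*} [RCLike 𝕜] {p q : ℕ → 𝕜} {t P Q : 𝕜}
    (hp : HasSum (fun n => p n * t ^ n / n.factorial) P)
    (hq : HasSum (fun n => q n * t ^ n / n.factorial) Q) :
    HasSum (fun n => (∑ k ∈ range (n + 1), (n.choose k : 𝕜) * p k * q (n - k)) *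
      t ^ n / n.factorial) (P * Q) := by
  have h := hasSum_sum_range_mul_of_summable_norm hp.summable.norm hq.summable.norm
  rw [hp.tsum_eq, hq.tsum_eq] at h
  refine h.congr_fun fun n => ?_
  rw [sum_mul, sum_div]
  refine sum_congr rfl fun k hk => ?_
  have hkn : k ≤ n := mem_range_succ_iff.mp hk
  have hn : (n.factorial : 𝕜) ≠ 0 := Nat.cast_ne_zero.mpr n.factorial_ne_zero
  rw [Nat.cast_choose 𝕜 hkn, ← pow_mul_pow_sub t hkn]
  field_simp

theorem HasSum.egf_of_mul_pow {𝕜 : Type*} [Field 𝕜] [TopologicalSpace 𝕜] {p : ℕ → 𝕜}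
    {t c S : 𝕜} (h : HasSum (fun n => p n * (t * c) ^ n / n.factorial) S) :
    HasSum (fun n => c ^ n * p n * t ^ n / n.factorial) S := by
  convert h using 2 with n
  rw [mul_pow]
  ring

theorem one_sub_sq_div_exp_two_mul_sub_sq (a x : ℂ) :
    (1 - a ^ 2) / (Complex.exp (2 * x) - a ^ 2) =
      (1 - a) / (Complex.exp x - a) * ((1 + a) / (Complex.exp x + a)) := by
  rw [div_mul_div_comm, two_mul, Complex.exp_add]
  ring_nf

theorem genEulerian_duplication_general
    (A : ℂ → ℝ → ℕ → ℂ)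
    (hA : ∀ (a : ℂ) (b : ℝ), 0 < b → a ≠ 1 → ∃ r > (0:ℝ), ∀ t : ℂ, ‖t‖ < r →
      HasSum (fun n : ℕ => A a b n * t ^ n / (n.factorial : ℂ))
        ((1 - a) / (Complex.exp (t * (1 - a) * (Real.log b : ℂ)) - a)))
    (a : ℂ) (b : ℝ) (hb : 0 < b)
    (ha2 : a ^ 2 ≠ 1) (n : ℕ) :
    A (a ^ 2) (b ^ 2) n = ∑ k ∈ Finset.range (n + 1),
      (Nat.choose n k : ℂ) * (1 + a) ^ k * A a b k * A (-a) b (n - k) * (1 - a) ^ (n - k) := by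
  have egf (a : ℂ) (b : ℝ) (hb : 0 < b) (ha : a ≠ 1) : ∀ᶠ t in 𝓝 0,
      HasSum (fun n : ℕ => A a b n * t ^ n / (n.factorial : ℂ))
        ((1 - a) / (Complex.exp (t * (1 - a) * (Real.log b : ℂ)) - a)) := by
    obtain ⟨r, hr, h⟩ := hA a b hb ha
    exact Metric.eventually_nhds_iff.mpr ⟨r, hr, fun t ht => h t (by simpa using ht)⟩
  have scaled (c : ℂ) {P : ℂ → Prop} (h : ∀ᶠ t in 𝓝 0, P t) : ∀ᶠ t in 𝓝 0, P (t * c) :=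
    (continuous_mul_const c).tendsto' 0 0 (zero_mul c) |>.eventually h
  have ha : a ≠ 1 := by rintro rfl; exact ha2 (one_pow 2)
  have ha' : -a ≠ 1 := by rintro h; exact ha2 (by rw [← neg_sq, h, one_pow])
  refine congrFun (eq_of_eventually_hasSum_egf (egf (a ^ 2) (b ^ 2) (by positivity) ha2)
    (d := fun n => ∑ k ∈ range (n + 1),
      (n.choose k : ℂ) * (1 + a) ^ k * A a b k * A (-a) b (n - k) * (1 - a) ^ (n - k)) ?_) n
  filter_upwards [scaled (1 + a) (egf a b hb ha), scaled (1 - a) (egf (-a) b hb ha')]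
    with t hp hq
  set x := t * (1 + a) * (1 - a) * (Real.log b : ℂ)
  have hx : t * (1 - a ^ 2) * (Real.log (b ^ 2) : ℂ) = 2 * x := by
    rw [Real.log_pow]
    push_cast
    ring
  rw [show t * (1 - a) * (1 - -a) * (Real.log b : ℂ) = x by ring, sub_neg_eq_add,
    sub_neg_eq_add] at hq
  rw [hx, one_sub_sq_div_exp_two_mul_sub_sq]
  refine (hasSum_egf_mul hp.egf_of_mul_pow hq.egf_of_mul_pow).congr_fun fun m => ?_
  congr 2
  exact sum_congr rfl fun k _ => by ring

theorem genEulerian_duplication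
    (A : ℂ → ℝ → ℕ → ℂ)
    (hA : ∀ (a : ℂ) (b : ℝ), 0 < b → a ≠ 1 → ∃ r > (0:ℝ), ∀ t : ℂ, ‖t‖ < r →
      HasSum (fun n : ℕ => A a b n * t ^ n / (n.factorial : ℂ))
        ((1 - a) / (Complex.exp (t * (1 - a) * (Real.log b : ℂ)) - a)))
    (a : ℂ) (b : ℝ) (hb : 0 < b) (ha : a ≠ 1) (ha' : a ≠ -1)
    (ha2 : a ^ 2 ≠ 1) (n : ℕ) :
    A (a ^ 2) (b ^ 2) n = ∑ k ∈ Finset.range (n + 1),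
      (Nat.choose n k : ℂ) * (1 + a) ^ k * A a b k * A (-a) b (n - k) * (1 - a) ^ (n - k) :=
  genEulerian_duplication_general A hA a b hb ha2 n
end

section
/- The polylogarithm of negative integer order satisfies Li_{-n}(x) = ∑_{k=0}^n k! S(n+1, k+1) (x/(1-x))^{k+1} for |x| < 1, where S(n,k) denotes the Stirling numbers of the second kind and Li_{-n}(x) = ∑_{j=1}^∞ j^n x^j. -/
/-!
Expanding `(j + 1)^n` in the binomial basis gives
`(j + 1)^n = ∑ k, k! S(n+1, k+1) C(j, k)`, which follows by induction on `n` from the Stirling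
recurrence and `(j + 1) C(j, k) = (k + 1) (C(j, k) + C(j, k+1))`. Summing against `x^(j+1)`
reduces the claim to the negative binomial series `∑ j, C(j, k) x^(j+1) = (x / (1 - x))^(k+1)`.
-/

open Finset

/-- Stirling numbers of the second kind `S(n,k)`. -/
def stirling2 : ℕ → ℕ → ℕ
  | 0, 0 => 1
  | 0, _ + 1 => 0
  | _ + 1, 0 => 0
  | n + 1, k + 1 => (k + 1) * stirling2 n (k + 1) + stirling2 n k

theorem stirling2_eq_stirlingSecond : stirling2 = Nat.stirlingSecond := by
  funext n k
  induction n generalizing k with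
  | zero => cases k <;> rfl
  | succ n ih =>
    cases k with
    | zero => rfl
    | succ k => rw [stirling2, Nat.stirlingSecond_succ_succ, ih, ih]

theorem Nat.add_one_mul_choose_eq_mul_add_choose_succ (j k : ℕ) :
    (j + 1) * j.choose k = (k + 1) * (j.choose k + j.choose (k + 1)) := by
  rw [Nat.add_one_mul_choose_eq, Nat.choose_succ_succ, mul_comm]

open Nat in
theorem Nat.add_one_pow_eq_sum_factorial_mul_stirlingSecond_mul_choose (n j : ℕ) :
    (j + 1) ^ n =
      ∑ k ∈ range (n + 1), k ! * stirlingSecond (n + 1) (k + 1) * j.choose k := by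
  induction n with
  | zero => simp [stirlingSecond_self]
  | succ n ih =>
    have hmul (k : ℕ) : k ! * stirlingSecond (n + 1) (k + 1) * j.choose k * (j + 1) =
        (k + 1)! * stirlingSecond (n + 1) (k + 1) * j.choose k +
          (k + 1)! * stirlingSecond (n + 1) (k + 1) * j.choose (k + 1) := by
      rw [mul_assoc, mul_comm _ (j + 1), add_one_mul_choose_eq_mul_add_choose_succ,
        factorial_succ]
      ring
    have hrec (k : ℕ) : k ! * stirlingSecond (n + 2) (k + 1) * j.choose k =
        (k + 1)! * stirlingSecond (n + 1) (k + 1) * j.choose k +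
          k ! * stirlingSecond (n + 1) k * j.choose k := by
      rw [stirlingSecond_succ_succ, factorial_succ]
      ring
    calc (j + 1) ^ (n + 1)
        = ∑ k ∈ range (n + 1), ((k + 1)! * stirlingSecond (n + 1) (k + 1) * j.choose k +
            (k + 1)! * stirlingSecond (n + 1) (k + 1) * j.choose (k + 1)) := by
          rw [pow_succ, ih, sum_mul]
          exact sum_congr rfl fun k _ ↦ hmul k
      _ = ∑ k ∈ range (n + 2), (k + 1)! * stirlingSecond (n + 1) (k + 1) * j.choose k +
            ∑ k ∈ range (n + 2), k ! * stirlingSecond (n + 1) k * j.choose k := by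
          rw [sum_add_distrib, sum_range_succ _ (n + 1), sum_range_succ' _ (n + 1),
            stirlingSecond_eq_zero_of_lt (by omega : n + 1 < n + 2)]
          simp
      _ = ∑ k ∈ range (n + 2), k ! * stirlingSecond (n + 2) (k + 1) * j.choose k := by
          rw [← sum_add_distrib]
          exact sum_congr rfl fun k _ ↦ (hrec k).symm

theorem hasSum_choose_mul_pow_succ {𝕜 : Type*} [NormedField 𝕜] [HasSummableGeomSeries 𝕜]
    (k : ℕ) {x : 𝕜} (hx : ‖x‖ < 1) :
    HasSum (fun j : ℕ ↦ (j.choose k : 𝕜) * x ^ (j + 1)) ((x / (1 - x)) ^ (k + 1)) := by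
  have hshift : HasSum (fun j : ℕ ↦ ((j + k).choose k : 𝕜) * x ^ (j + k + 1))
      ((x / (1 - x)) ^ (k + 1)) := by
    have h := ((hasSum_choose_mul_geometric_of_norm_lt_one k hx).mul_left (x ^ (k + 1))).congr_fun
      fun j ↦ show ((j + k).choose k : 𝕜) * x ^ (j + k + 1) = _ by ring
    rwa [mul_one_div, ← div_pow] at h
  have hvanish : ∑ j ∈ range k, (j.choose k : 𝕜) * x ^ (j + 1) = 0 :=
    sum_eq_zero fun j hj ↦ by
      rw [Nat.choose_eq_zero_of_lt (mem_range.mp hj), Nat.cast_zero, zero_mul]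
  simpa [hvanish] using
    (hasSum_nat_add_iff (f := fun j ↦ (j.choose k : 𝕜) * x ^ (j + 1)) k).mp hshift

theorem hasSum_add_one_pow_mul_pow_succ {𝕜 : Type*} [NormedField 𝕜]
    [HasSummableGeomSeries 𝕜] (n : ℕ) {x : 𝕜} (hx : ‖x‖ < 1) :
    HasSum (fun j : ℕ ↦ ((j : 𝕜) + 1) ^ n * x ^ (j + 1))
      (∑ k ∈ range (n + 1),
        (k.factorial : 𝕜) * (Nat.stirlingSecond (n + 1) (k + 1) : 𝕜) *
          (x / (1 - x)) ^ (k + 1)) := by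
  refine (hasSum_sum fun k _ ↦ (hasSum_choose_mul_pow_succ k hx).mul_left
    ((k.factorial : 𝕜) * (Nat.stirlingSecond (n + 1) (k + 1) : 𝕜))).congr_fun fun j ↦ ?_
  rw [← Nat.cast_add_one, ← Nat.cast_pow,
    Nat.add_one_pow_eq_sum_factorial_mul_stirlingSecond_mul_choose, Nat.cast_sum, sum_mul]
  push_cast
  exact sum_congr rfl fun k _ ↦ by ring

theorem polylog_neg_stirling (n : ℕ) (x : ℝ) (hx : |x| < 1) :
    ∑' j : ℕ, ((j : ℝ) + 1) ^ n * x ^ (j + 1) =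
      ∑ k ∈ Finset.range (n + 1),
        (Nat.factorial k : ℝ) * (stirling2 (n + 1) (k + 1) : ℝ) * (x / (1 - x)) ^ (k + 1) := by
  rw [stirling2_eq_stirlingSecond]
  exact (hasSum_add_one_pow_mul_pow_succ n (by rwa [Real.norm_eq_abs])).tsum_eq
end

section
/- For n ≥ 1 and b > 0, the Abel-summed value of A_n(-1,b) satisfies A_n(-1, b) = 2^{n+1} (ln b)^n · lim_{x→1⁻} ∑_{j=1}^∞ (-1)^j j^n x^j, i.e., A_n(-1,b) = 2^n (ln b)^n ζ_E(-n) where ζ_E(s) = 2 ∑_{j≥1} (-1)^j j^{-s} (interpreted by analytic continuation / Abel summation). -/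
/-!
For `|y| < 1` put `S n y = ∑ k^n y^k`. Expanding `(k + 1)^n` binomially gives
`(1 - y) S n y = 0^n + y ∑_{i<n} C(n,i) S i y`, so by induction each `S n y` has a limit `ℓ n`
as `y → -1⁺`, and `2 ℓ n + ∑_{i<n} C(n,i) ℓ i = 0^n`.

On the other side, the generating function identifies `A (-1) b n` with the `n`-th derivative
at `0` of `2 / (exp (c t) + 1)`, `c = 2 log b`, and Leibniz's rule applied to
`2 / (exp (c t) + 1) * (exp (c t) + 1) = 2` gives the same recurrence, twisted by powers of `c`.
So both sides are `E_n(0)` up to the factors `1/2` and `c^n`; the Abel sum differs from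
`S n (-x)` only by the term `k = 0`, which vanishes for `n ≥ 1`.
-/

open Filter Topology Finset

/-- `E_n(0)`, the value at `0` of the `n`-th Euler polynomial: `2 / (eˢ + 1) = ∑ E_n(0) sⁿ / n!`. -/
def eulerPolyZero : ℕ → ℚ
  | n => 0 ^ n - (∑ i : Fin n, (n.choose i : ℚ) * eulerPolyZero i) / 2

theorem two_mul_eulerPolyZero_add_sum (n : ℕ) :
    2 * eulerPolyZero n + ∑ i ∈ range n, (n.choose i : ℚ) * eulerPolyZero i = 2 * 0 ^ n := by
  rw [eulerPolyZero, Finset.sum_range (fun i => (n.choose i : ℚ) * eulerPolyZero i)]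
  ring

theorem eq_pow_mul_eulerPolyZero {K : Type*} [Field K] [CharZero K] {c : K} {u : ℕ → K}
    (hu : ∀ n, 2 * u n + ∑ i ∈ range n, (n.choose i : K) * u i * c ^ (n - i) = 2 * 0 ^ n)
    (n : ℕ) : u n = c ^ n * eulerPolyZero n := by
  induction n using Nat.strong_induction_on with
  | _ n ih =>
    have hE : 2 * (eulerPolyZero n : K) + ∑ i ∈ range n, (n.choose i : K) * eulerPolyZero i
        = 2 * 0 ^ n := by exact_mod_cast two_mul_eulerPolyZero_add_sum n
    have hsum : ∑ i ∈ range n, (n.choose i : K) * u i * c ^ (n - i)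
        = c ^ n * ∑ i ∈ range n, (n.choose i : K) * eulerPolyZero i := by
      rw [mul_sum]
      refine sum_congr rfl fun i hi => ?_
      rw [ih i (mem_range.mp hi), ← pow_mul_pow_sub c (mem_range.mp hi).le]
      ring
    have hzero : c ^ n * (0 : K) ^ n = 0 ^ n := by rw [← mul_pow, mul_zero]
    linear_combination (hu n - c ^ n * hE - hsum) / 2 - hzero

theorem one_sub_mul_tsum_pow_mul_geometric {𝕜 : Type*} [NormedField 𝕜] [CompleteSpace 𝕜]
    {y : 𝕜} (hy : ‖y‖ < 1) (n : ℕ) :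
    (1 - y) * ∑' k : ℕ, (k : 𝕜) ^ n * y ^ k
      = 0 ^ n + y * ∑ i ∈ range n, (n.choose i : 𝕜) * ∑' k : ℕ, (k : 𝕜) ^ i * y ^ k := by
  set S : ℕ → 𝕜 := fun i => ∑' k : ℕ, (k : 𝕜) ^ i * y ^ k
  have hS (i : ℕ) : HasSum (fun k : ℕ => (k : 𝕜) ^ i * y ^ k) (S i) :=
    (summable_pow_mul_geometric_of_norm_lt_one i hy).hasSum
  have hbinom (k : ℕ) : ((k + 1 : ℕ) : 𝕜) ^ n * y ^ (k + 1)
      = y * ((k : 𝕜) ^ n * y ^ k + ∑ i ∈ range n, (n.choose i : 𝕜) * ((k : 𝕜) ^ i * y ^ k)) := by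
    rw [Nat.cast_succ, add_pow, sum_range_succ, mul_add, add_mul, sum_mul, mul_sum, Nat.choose_self,
      add_comm]
    congr 1
    · ring
    · exact sum_congr rfl fun i _ => by ring
  have htail : HasSum (fun k : ℕ => ((k + 1 : ℕ) : 𝕜) ^ n * y ^ (k + 1))
      (y * (S n + ∑ i ∈ range n, (n.choose i : 𝕜) * S i)) := by
    simp only [hbinom]
    exact ((hS n).add (hasSum_sum fun i _ => (hS i).mul_left _)).mul_left y
  have hshift := (hasSum_nat_add_iff (f := fun k : ℕ => (k : 𝕜) ^ n * y ^ k) 1).mp htail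
  rw [sum_range_one, Nat.cast_zero, pow_zero, mul_one] at hshift
  linear_combination (hS n).unique hshift

theorem tendsto_tsum_pow_mul_geometric_nhdsGT_neg_one (n : ℕ) :
    Tendsto (fun y : ℝ => ∑' k : ℕ, (k : ℝ) ^ n * y ^ k) (𝓝[>] (-1))
      (𝓝 (eulerPolyZero n / 2)) := by
  induction n using Nat.strong_induction_on with
  | _ n ih =>
    have hrec : (fun y : ℝ => (0 ^ n + y * ∑ i ∈ range n,
        (n.choose i : ℝ) * ∑' k : ℕ, (k : ℝ) ^ i * y ^ k) / (1 - y))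
        =ᶠ[𝓝[>] (-1)] fun y => ∑' k : ℕ, (k : ℝ) ^ n * y ^ k := by
      filter_upwards [Ioo_mem_nhdsGT (show (-1 : ℝ) < 1 by norm_num)] with y hy
      rw [div_eq_iff (by linarith [hy.2])]
      linear_combination -one_sub_mul_tsum_pow_mul_geometric (by rwa [Real.norm_eq_abs, abs_lt]) n
    have hlim := ((tendsto_const_nhds (x := (0 : ℝ) ^ n)).add
      (tendsto_nhdsWithin_of_tendsto_nhds tendsto_id |>.mul
        (tendsto_finsetSum _ fun i hi => (ih i (mem_range.mp hi)).const_mul (n.choose i : ℝ)))).div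
      ((tendsto_const_nhds (x := (1 : ℝ))).sub (tendsto_nhdsWithin_of_tendsto_nhds tendsto_id))
      (by norm_num)
    have hE : 2 * (eulerPolyZero n : ℝ) + ∑ i ∈ range n, (n.choose i : ℝ) * eulerPolyZero i
        = 2 * 0 ^ n := by exact_mod_cast two_mul_eulerPolyZero_add_sum n
    convert hlim.congr' hrec using 2
    simp only [← mul_div_assoc]
    rw [← sum_div]
    linear_combination hE / 4

theorem eq_iteratedDeriv_zero_of_hasSum {𝕜 : Type*} [NontriviallyNormedField 𝕜] [CompleteSpace 𝕜]
    [CharZero 𝕜] {f : 𝕜 → 𝕜} {a : ℕ → 𝕜} {r : ℝ} (hr : 0 < r)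
    (h : ∀ t : 𝕜, ‖t‖ < r → HasSum (fun n => a n * t ^ n / n.factorial) (f t)) (n : ℕ) :
    a n = iteratedDeriv n f 0 := by
  have hf : HasFPowerSeriesAt f (.ofScalars 𝕜 fun n => a n / n.factorial) 0 := by
    rw [hasFPowerSeriesAt_iff]
    filter_upwards [Metric.ball_mem_nhds 0 hr] with t ht
    rw [zero_add]
    refine (h t (mem_ball_zero_iff.mp ht)).congr_fun fun k => ?_
    rw [FormalMultilinearSeries.coeff_ofScalars, smul_eq_mul]
    ring
  have hcoeff := congrFun ((FormalMultilinearSeries.ofScalars_series_eq_iff 𝕜 _ _).mp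
    (hf.eq_formalMultilinearSeries hf.analyticAt.hasFPowerSeriesAt)) n
  exact (div_left_inj' (Nat.cast_ne_zero.mpr n.factorial_ne_zero)).mp hcoeff

open Complex in
theorem iteratedDeriv_two_div_exp_add_one_recurrence (c : ℂ) (n : ℕ) :
    2 * iteratedDeriv n (fun t => 2 / (exp (c * t) + 1)) 0
      + ∑ i ∈ range n, (n.choose i : ℂ) * iteratedDeriv i (fun t => 2 / (exp (c * t) + 1)) 0
        * c ^ (n - i) = 2 * 0 ^ n := by
  set g : ℂ → ℂ := fun t => exp (c * t) + 1
  have hg0 : g 0 ≠ 0 := by norm_num [g]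
  have hg : ContDiffAt ℂ n g 0 := by fun_prop
  have hf : ContDiffAt ℂ n (fun t => 2 / g t) 0 := by fun_prop (disch := exact hg0)
  have hfg : (fun t => 2 / g t) * g =ᶠ[𝓝 0] fun _ => 2 := by
    filter_upwards [hg.continuousAt.eventually_ne hg0] with t ht
    exact div_mul_cancel₀ 2 ht
  have hg_deriv (k : ℕ) : iteratedDeriv k g 0 = c ^ k + if k = 0 then 1 else 0 := by
    rw [iteratedDeriv_fun_add (by fun_prop) contDiffAt_const, iteratedDeriv_cexp_const_mul,
      iteratedDeriv_const]
    simp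
  have hleibniz := (iteratedDeriv_mul hf hg).symm.trans (hfg.iteratedDeriv_eq n)
  rw [iteratedDeriv_const, sum_range_succ, Nat.sub_self, hg_deriv] at hleibniz
  have hlow : ∑ i ∈ range n, (n.choose i : ℂ) * iteratedDeriv i (fun t => 2 / g t) 0
      * iteratedDeriv (n - i) g 0
      = ∑ i ∈ range n, (n.choose i : ℂ) * iteratedDeriv i (fun t => 2 / g t) 0 * c ^ (n - i) :=
    sum_congr rfl fun i hi => by
      rw [hg_deriv, if_neg (Nat.sub_ne_zero_of_lt (mem_range.mp hi)), add_zero]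
  rw [hlow, Nat.choose_self, if_pos rfl, pow_zero] at hleibniz
  rw [zero_pow_eq]
  split_ifs at hleibniz ⊢ <;> linear_combination hleibniz

theorem iteratedDeriv_two_div_exp_add_one (c : ℂ) (n : ℕ) :
    iteratedDeriv n (fun t => 2 / (Complex.exp (c * t) + 1)) 0 = c ^ n * eulerPolyZero n :=
  eq_pow_mul_eulerPolyZero (iteratedDeriv_two_div_exp_add_one_recurrence c) n

theorem genEulerian_neg_one_euler_zeta
    (A : ℂ → ℝ → ℕ → ℂ)
    (hA : ∀ (a : ℂ) (b : ℝ), 0 < b → a ≠ 1 → ∃ r > (0:ℝ), ∀ t : ℂ, ‖t‖ < r →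
      HasSum (fun n : ℕ => A a b n * t ^ n / (n.factorial : ℂ))
        ((1 - a) / (Complex.exp (t * (1 - a) * (Real.log b : ℂ)) - a)))
    (b : ℝ) (hb : 0 < b) (n : ℕ) (hn : 1 ≤ n) :
    ∃ L : ℝ, Tendsto (fun x : ℝ => ∑' j : ℕ, (-1 : ℝ) ^ (j + 1) * ((j : ℝ) + 1) ^ n * x ^ (j + 1))
        (𝓝[<] (1 : ℝ)) (𝓝 L) ∧
      A (-1) b n = 2 ^ (n + 1) * (Real.log b : ℂ) ^ n * (L : ℂ) := by
  refine ⟨eulerPolyZero n / 2, ?_, ?_⟩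
  · have hshift : (fun x : ℝ => ∑' k : ℕ, (k : ℝ) ^ n * (-x) ^ k) =ᶠ[𝓝[<] 1]
        fun x => ∑' j : ℕ, (-1 : ℝ) ^ (j + 1) * ((j : ℝ) + 1) ^ n * x ^ (j + 1) := by
      filter_upwards [Ioo_mem_nhdsLT (show (-1 : ℝ) < 1 by norm_num)] with x hx
      have hx' : ‖-x‖ < 1 := by rwa [norm_neg, Real.norm_eq_abs, abs_lt]
      rw [(summable_pow_mul_geometric_of_norm_lt_one n hx').tsum_eq_zero_add, Nat.cast_zero, zero_pow (by omega), zero_mul, zero_add]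
      congr 1 with j
      rw [neg_pow x, Nat.cast_succ]
      ring
    exact ((tendsto_tsum_pow_mul_geometric_nhdsGT_neg_one n).comp tendsto_neg_nhdsLT).congr' hshift
  · obtain ⟨r, hr, hsum⟩ := hA (-1) b hb (by norm_num)
    have hf : (fun t : ℂ => (1 - -1) / (Complex.exp (t * (1 - -1) * Real.log b) - -1))
        = fun t => 2 / (Complex.exp (2 * Real.log b * t) + 1) := by
      funext t
      ring_nf
    rw [eq_iteratedDeriv_zero_of_hasSum hr hsum n, hf, iteratedDeriv_two_div_exp_add_one]
    push_cast
    ring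
end

section
/- Witt's formula: for an odd prime p, all n ≥ 0, and b > 0, A_n(-1, b) = (ln b)^n 2^n ∫_{ℤ_p} υ^n dμ_{-1}(υ), where the fermionic p-adic integral is I_{-1}(f) = lim_{N→∞} ∑_{υ=0}^{p^N - 1} (-1)^υ f(υ). In particular ∫_{ℤ_p} υ^n dμ_{-1}(υ) = E_n, the n-th Euler number. -/
/-!
The Taylor coefficients at `0` of `f t = 2 / (eᵗ + 1)` are the `E k`, so by Leibniz's rule those
of `f t * e^{xt}` are the values of the Euler polynomial `E_n(x) = ∑ₖ C(n,k) E_k x^{n-k}`. The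
identity `f t e^{(x+1)t} + f t e^{xt} = 2 e^{xt}` then gives `E_n(x + 1) + E_n(x) = 2 xⁿ`, which
telescopes to `2 ∑_{υ < m} (-1)^υ υⁿ = E_n(0) + E_n(m)` for odd `m`; since `p^N → 0` in `ℚ_[p]`,
the fermionic sums tend to `E_n(0) = E_n`. For `A_n(-1, b)`, both `∑ A_n tⁿ / n!` and
`∑ E_n (2 t ln b)ⁿ / n!` represent `2 / (e^{2 t ln b} + 1)` near `0` on the real line, so their
coefficients agree.
-/

open Filter Topology Finset Polynomial Nat

theorem iteratedDeriv_zero_eq_of_eventually_hasSum {𝕜 : Type*} [NontriviallyNormedField 𝕜]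
    [CharZero 𝕜] {F : Type*} [NormedAddCommGroup F] [NormedSpace 𝕜 F] [CompleteSpace F]
    {f : 𝕜 → F} {c : ℕ → F}
    (h : ∀ᶠ t : 𝕜 in 𝓝 0, HasSum (fun n => (t ^ n / n !) • c n) (f t)) (n : ℕ) :
    iteratedDeriv n f 0 = c n := by
  obtain ⟨ε, hε, hsum⟩ := Metric.eventually_nhds_iff.mp h
  obtain ⟨t₀, ht₀, ht₀ε⟩ := NormedField.exists_norm_lt 𝕜 hε
  set p : FormalMultilinearSeries 𝕜 𝕜 F :=
    fun n => ContinuousMultilinearMap.mkPiRing 𝕜 (Fin n) ((n ! : 𝕜)⁻¹ • c n)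
  have hp : ∀ n y, (p n fun _ => y) = (y ^ n / n !) • c n := by
    intro n y
    simp [p, smul_smul, div_eq_mul_inv]
  have hball : HasFPowerSeriesOnBall f p 0 ‖t₀‖₊ := by
    refine ⟨?_, by simpa using ht₀, fun {y} hy => ?_⟩
    · refine p.le_radius_of_tendsto (l := 0) ?_
      have := (hsum (y := t₀) (by simpa using ht₀ε)).summable.tendsto_atTop_zero.norm
      rw [norm_zero] at this
      refine this.congr fun n => ?_
      simp only [p, ContinuousMultilinearMap.norm_mkPiRing, norm_smul, div_eq_mul_inv, norm_mul,
        norm_pow, norm_inv, coe_nnnorm]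
      ring
    · have hy' : ‖y‖ < ‖t₀‖ := by simpa [Metric.mem_eball] using hy
      simpa [hp] using hsum (y := y) (by simpa using hy'.trans ht₀ε)
  rw [iteratedDeriv_eq_iteratedFDeriv, ← hball.factorial_smul, hp, ← Nat.cast_smul_eq_nsmul 𝕜,
    one_pow, one_div, smul_smul, mul_inv_cancel₀ (by exact_mod_cast n.factorial_ne_zero), one_smul]

theorem contDiff_two_div_exp_add_one {n : WithTop ℕ∞} :
    ContDiff ℝ n fun t : ℝ => 2 / (Real.exp t + 1) :=
  contDiff_const.div (Real.contDiff_exp.add contDiff_const) fun t => by positivity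

theorem iteratedDeriv_mul_exp_const_mul {f : ℝ → ℝ} {n : ℕ} (hf : ContDiffAt ℝ n f 0) (x : ℝ) :
    iteratedDeriv n (fun t => f t * Real.exp (x * t)) 0 =
      ∑ k ∈ range (n + 1), n.choose k * iteratedDeriv k f 0 * x ^ (n - k) := by
  have hexp : ContDiffAt ℝ n (fun t => Real.exp (x * t)) 0 := by fun_prop
  rw [iteratedDeriv_fun_mul hf hexp]
  simp

noncomputable def eulerPoly (E : ℕ → ℚ) (n : ℕ) : ℚ[X] :=
  ∑ k ∈ range (n + 1), C (n.choose k * E k) * X ^ (n - k)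

theorem eval_zero_eulerPoly (E : ℕ → ℚ) (n : ℕ) : (eulerPoly E n).eval 0 = E n := by
  rw [eulerPoly, eval_finsetSum, sum_range_succ, sum_eq_zero fun k hk => ?_]
  · simp
  · simp [zero_pow (Nat.sub_ne_zero_of_lt (mem_range.mp hk))]

theorem aeval_eulerPoly (E : ℕ → ℚ) (n : ℕ) (x : ℝ) :
    aeval x (eulerPoly E n) = ∑ k ∈ range (n + 1), n.choose k * (E k : ℝ) * x ^ (n - k) := by
  simp [eulerPoly]

theorem eulerPoly_comp_add_one_add {E : ℕ → ℚ}
    (hE : ∀ k, iteratedDeriv k (fun t : ℝ => 2 / (Real.exp t + 1)) 0 = E k) (n : ℕ) :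
    (eulerPoly E n).comp (X + 1) + eulerPoly E n = 2 * X ^ n := by
  have hsmooth : ContDiffAt ℝ n (fun t : ℝ => 2 / (Real.exp t + 1)) 0 :=
    contDiff_two_div_exp_add_one.contDiffAt
  have hreal (x : ℝ) : aeval (x + 1) (eulerPoly E n) + aeval x (eulerPoly E n) = 2 * x ^ n := by
    have hgen : (fun t => 2 / (Real.exp t + 1) * Real.exp ((x + 1) * t) +
        2 / (Real.exp t + 1) * Real.exp (x * t)) = fun t => 2 * Real.exp (x * t) := by
      funext t
      rw [add_mul, one_mul, Real.exp_add]
      field_simp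
    have := congrArg (iteratedDeriv n · 0) hgen
    rw [iteratedDeriv_fun_add (by fun_prop) (by fun_prop),
      iteratedDeriv_mul_exp_const_mul hsmooth, iteratedDeriv_mul_exp_const_mul hsmooth,
      iteratedDeriv_const_mul _ (by fun_prop)] at this
    simpa [aeval_eulerPoly, hE] using this
  apply Polynomial.funext
  intro q
  apply Rat.cast_injective (α := ℝ)
  have hcast (r : ℚ) : (((eulerPoly E n).eval r : ℚ) : ℝ) = aeval (r : ℝ) (eulerPoly E n) := by
    simpa using (aeval_algebraMap_apply_eq_algebraMap_eval (A := ℝ) r (eulerPoly E n)).symm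
  simpa [eval_comp, hcast] using hreal q

theorem two_mul_sum_range_neg_one_pow_mul {R : Type*} [CommRing R] {f g : ℕ → R}
    (h : ∀ k, g (k + 1) + g k = 2 * f k) (m : ℕ) :
    2 * ∑ k ∈ range m, (-1) ^ k * f k = g 0 - (-1) ^ m * g m := by
  induction m with
  | zero => simp
  | succ m ih => rw [sum_range_succ, mul_add, ih, pow_succ]; linear_combination -(-1) ^ m * h m

theorem tendsto_sum_range_neg_one_pow_mul_pow {p : ℕ} [Fact p.Prime] (hp : Odd p) {n : ℕ}
    {Q : ℚ[X]} (hQ : Q.comp (X + 1) + Q = 2 * X ^ n) :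
    Tendsto (fun N : ℕ => ∑ υ ∈ range (p ^ N), (-1 : ℚ_[p]) ^ υ * (υ : ℚ_[p]) ^ n)
      atTop (𝓝 ((Q.eval 0 : ℚ) : ℚ_[p])) := by
  have hstep (k : ℕ) :
      aeval ((k + 1 : ℕ) : ℚ_[p]) Q + aeval (k : ℚ_[p]) Q = 2 * (k : ℚ_[p]) ^ n := by
    simpa [aeval_comp, map_ofNat] using congrArg (aeval (k : ℚ_[p])) hQ
  have hsum : ∀ N, ∑ υ ∈ range (p ^ N), (-1 : ℚ_[p]) ^ υ * (υ : ℚ_[p]) ^ n =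
      (aeval (0 : ℚ_[p]) Q + aeval ((p : ℚ_[p]) ^ N) Q) / 2 := by
    intro N
    have := two_mul_sum_range_neg_one_pow_mul hstep (p ^ N)
    rw [(hp.pow).neg_one_pow] at this
    push_cast at this
    linear_combination this / 2
  have hpow : Tendsto (fun N : ℕ => (p : ℚ_[p]) ^ N) atTop (𝓝 0) :=
    tendsto_pow_atTop_nhds_zero_of_norm_lt_one Padic.norm_p_lt_one
  have hlim := ((((Polynomial.continuous_aeval Q).tendsto 0).comp hpow).const_add
    (aeval (0 : ℚ_[p]) Q)).div_const 2
  have h0 : ((Q.eval 0 : ℚ) : ℚ_[p]) = (aeval 0 Q + aeval 0 Q) / 2 := by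
    rw [← eq_ratCast (algebraMap ℚ ℚ_[p]), ← coeff_zero_eq_eval_zero, coeff_zero_eq_aeval_zero']
    ring
  rw [funext hsum, h0]
  exact hlim

theorem iteratedDeriv_two_div_exp_add_one_s14 {E : ℕ → ℚ}
    (hE : ∀ᶠ t : ℝ in 𝓝 0, HasSum (fun n => (E n : ℝ) * t ^ n / n !) (2 / (Real.exp t + 1)))
    (n : ℕ) : iteratedDeriv n (fun t : ℝ => 2 / (Real.exp t + 1)) 0 = E n := by
  refine iteratedDeriv_zero_eq_of_eventually_hasSum (c := fun k => (E k : ℝ))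
    (hE.mono fun t ht => ?_) n
  have hterm : (fun k => (t ^ k / k ! : ℝ) • (E k : ℝ)) = fun k => (E k : ℝ) * t ^ k / k ! := by
    funext k
    rw [smul_eq_mul]
    ring
  rwa [hterm]

theorem eq_pow_mul_of_hasSum_two_div_exp_mul_add_one {c : ℕ → ℂ} {L : ℝ} {E : ℕ → ℚ}
    (hc : ∀ᶠ t : ℂ in 𝓝 0,
      HasSum (fun n => c n * t ^ n / n !) (2 / (Complex.exp (t * 2 * L) + 1)))
    (hE : ∀ᶠ t : ℝ in 𝓝 0, HasSum (fun n => (E n : ℝ) * t ^ n / n !) (2 / (Real.exp t + 1)))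
    (n : ℕ) : c n = (2 * L) ^ n * E n := by
  set G : ℝ → ℂ := fun t => 2 / (Complex.exp (t * 2 * L) + 1)
  have hcG : ∀ᶠ t : ℝ in 𝓝 0, HasSum (fun n => (t ^ n / n ! : ℝ) • c n) (G t) := by
    have := Complex.continuous_ofReal.tendsto' 0 0 Complex.ofReal_zero
    refine (this.eventually hc).mono fun t ht => ?_
    convert ht using 2 with k
    rw [Complex.real_smul]
    push_cast
    ring
  have hEG : ∀ᶠ t : ℝ in 𝓝 0,
      HasSum (fun n => (t ^ n / n ! : ℝ) • ((2 * L) ^ n * E n : ℂ)) (G t) := by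
    have := (continuous_const_mul (2 * L)).tendsto' 0 0 (mul_zero _)
    refine (this.eventually hE).mono fun t ht => ?_
    convert Complex.hasSum_ofReal.mpr ht using 1
    · funext k
      rw [Complex.real_smul]
      push_cast
      ring
    · simp only [G]
      push_cast
      ring_nf
  rw [← iteratedDeriv_zero_eq_of_eventually_hasSum hcG,
    iteratedDeriv_zero_eq_of_eventually_hasSum hEG]

/-- Witt's formula: the fermionic p-adic integral of `υ ^ n` is the Euler number `E n`,
and `A_n(-1,b) = (ln b)^n 2^n E_n`. -/
theorem genEulerian_witt_formula
    (A : ℂ → ℝ → ℕ → ℂ)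
    (hA : ∀ (a : ℂ) (b : ℝ), 0 < b → a ≠ 1 → ∃ r > (0:ℝ), ∀ t : ℂ, ‖t‖ < r →
      HasSum (fun n : ℕ => A a b n * t ^ n / (n.factorial : ℂ))
        ((1 - a) / (Complex.exp (t * (1 - a) * (Real.log b : ℂ)) - a)))
    (E : ℕ → ℚ)
    (hE : ∃ r > (0:ℝ), ∀ t : ℝ, |t| < r →
      HasSum (fun n : ℕ => (E n : ℝ) * t ^ n / (n.factorial : ℝ)) (2 / (Real.exp t + 1)))
    (p : ℕ) [Fact p.Prime] (hp : Odd p)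
    (b : ℝ) (hb : 0 < b) (n : ℕ) :
    Tendsto (fun N : ℕ => ∑ υ ∈ Finset.range (p ^ N), (-1 : ℚ_[p]) ^ υ * (υ : ℚ_[p]) ^ n)
        atTop (𝓝 ((E n : ℚ_[p]))) ∧
      A (-1) b n = (Real.log b : ℂ) ^ n * 2 ^ n * ((E n : ℚ) : ℂ) := by
  obtain ⟨rE, hrE, hsumE⟩ := hE
  have hE' : ∀ᶠ t : ℝ in 𝓝 0, HasSum (fun n => (E n : ℝ) * t ^ n / n !) (2 / (Real.exp t + 1)) :=
    Metric.eventually_nhds_iff.mpr ⟨rE, hrE, fun t ht => hsumE t (by simpa using ht)⟩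
  obtain ⟨rA, hrA, hsumA⟩ := hA (-1) b hb (by norm_num)
  have hA' : ∀ᶠ t : ℂ in 𝓝 0, HasSum (fun n => A (-1) b n * t ^ n / n !)
      (2 / (Complex.exp (t * 2 * Real.log b) + 1)) :=
    Metric.eventually_nhds_iff.mpr ⟨rA, hrA, fun t ht => by
      simpa [one_add_one_eq_two] using hsumA t (by simpa using ht)⟩
  refine ⟨?_, ?_⟩
  · have := tendsto_sum_range_neg_one_pow_mul_pow hp
      (eulerPoly_comp_add_one_add (iteratedDeriv_two_div_exp_add_one_s14 hE') n)
    rwa [eval_zero_eulerPoly] at this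
  · rw [eq_pow_mul_of_hasSum_two_div_exp_mul_add_one hA' hE', mul_pow]
    ring
end
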